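/- arXiv:1002.1828 — 8 statements merged into one kernel-verified Lean document; each statement's English description precedes it below -/
import Mathlib

section
/- For every n ≥ 3 and every integer k with 1 ≤ k ≤ n-2, the sum ∑_{i=1}^{k-1} i·2^{i+1}·(2n-i-5)!/(n-i-2)! equals (4+k-2n)·2^{k+1}·(2n-k-5)!/(n-k-2)! + 4·(2n-5)!/(n-3)!. -/
open Nat Finset

theorem sum_gosper (n k : ℕ) (hn : 3 ≤ n) (hk1 : 1 ≤ k) (hk2 : k ≤ n - 2) :
    ∑ i ∈ Finset.Icc 1 (k - 1),
        (i : ℚ) * 2 ^ (i + 1) * ((2 * n - i - 5)! : ℚ) / ((n - i - 2)! : ℚ)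
      = (4 + (k : ℚ) - 2 * n) * 2 ^ (k + 1) * ((2 * n - k - 5)! : ℚ) / ((n - k - 2)! : ℚ)
        + 4 * ((2 * n - 5)! : ℚ) / ((n - 3)! : ℚ) := by
  induction k, hk1 using Nat.le_induction with
  | base =>
    obtain ⟨m, rfl⟩ : ∃ m, n = m + 3 := ⟨n - 3, by omega⟩
    have e1 : 2 * (m + 3) - 1 - 5 = 2 * m := by omega
    have e2 : (m + 3) - 1 - 2 = m := by omega
    have e3 : 2 * (m + 3) - 5 = 2 * m + 1 := by omega
    have e4 : (m + 3) - 3 = m := by omega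
    rw [e1, e2, e3, e4]
    simp only [Nat.sub_self, Finset.Icc_eq_empty_of_lt (by norm_num : (0:ℕ) < 1)]
    rw [Nat.factorial_succ]
    have hm : ((m)! : ℚ) ≠ 0 := by positivity
    push_cast
    field_simp
    ring
  | succ j hj ih =>
    obtain ⟨p, rfl⟩ : ∃ p, j = p + 1 := ⟨j - 1, by omega⟩
    have hj2 : p + 1 ≤ n - 2 := by omega
    obtain ⟨m, rfl⟩ : ∃ m, n = m + p + 4 := ⟨n - p - 4, by omega⟩
    have IH := ih hj2
    have E1 : 2 * (m + p + 4) - (p + 1) - 5 = 2 * m + p + 2 := by omega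
    have E2 : (m + p + 4) - (p + 1) - 2 = m + 1 := by omega
    have E3 : 2 * (m + p + 4) - (p + 1 + 1) - 5 = 2 * m + p + 1 := by omega
    have E4 : (m + p + 4) - (p + 1 + 1) - 2 = m := by omega
    have E5 : 2 * (m + p + 4) - 5 = 2 * m + 2 * p + 3 := by omega
    have E6 : (m + p + 4) - 3 = m + p + 1 := by omega
    rw [E1, E2, E5, E6] at IH
    rw [E3, E4, E5, E6]
    simp only [Nat.add_sub_cancel] at IH ⊢
    rw [Finset.sum_Icc_succ_top (by omega : 1 ≤ p + 1), IH, E1, E2]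
    have F1 : (2 * m + p + 2)! = (2 * m + p + 2) * (2 * m + p + 1)! := by
      rw [show 2 * m + p + 2 = (2 * m + p + 1) + 1 from by omega, Nat.factorial_succ]
    have F2 : (m + 1)! = (m + 1) * (m)! := Nat.factorial_succ m
    rw [F1, F2]
    have h1 : ((m)! : ℚ) ≠ 0 := by positivity
    have h2 : ((2 * m + p + 1)! : ℚ) ≠ 0 := by positivity
    have h3 : ((m + p + 1)! : ℚ) ≠ 0 := by positivity
    push_cast
    field_simp
    ring
end

section
/- Let c_i = (i-1)·(2n-i-4)!/(2(n-i-1))!! for 1 ≤ i ≤ n-2. Then for every n ≥ 3 and every k with 1 ≤ k ≤ n-2, (1/(2n-5)!!)·∑_{i=1}^{k} c_i = 1 - 2^k·(n-3)!·(2n-k-4)! / (2·(2n-5)!·(n-k-2)!). -/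
open Nat Finset

lemma sum_ci_key (m j : ℕ) (hj : j ≤ m) :
    (1 / (((2 * m + 1)‼ : ℕ) : ℚ)) *
        ∑ i ∈ Finset.Icc 1 (j + 1),
          ((i : ℚ) - 1) * ((2 * m + 2 - i)! : ℚ) / (((2 * (m + 2 - i))‼ : ℕ) : ℚ)
      = 1 - 2 ^ (j + 1) * ((m)! : ℚ) * ((2 * m + 1 - j)! : ℚ)
          / (2 * ((2 * m + 1)! : ℚ) * ((m - j)! : ℚ)) := by
  induction j with
  | zero =>
    rw [Finset.Icc_self, Finset.sum_singleton]
    have h1 : ((2 * m + 1)! : ℚ) ≠ 0 := by positivity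
    have h2 : ((m)! : ℚ) ≠ 0 := by positivity
    simp
    field_simp
    ring
  | succ j ih =>
    obtain ⟨p, rfl⟩ : ∃ p, m = j + 1 + p := ⟨m - (j + 1), by omega⟩
    rw [Finset.sum_Icc_succ_top (by omega), mul_add, ih (by omega)]
    have ea : 2 * (j + 1 + p) + 1 - j = j + 2 * p + 3 := by omega
    have eb : j + 1 + p - j = p + 1 := by omega
    have ec : 2 * (j + 1 + p) + 2 - (j + 1 + 1) = j + 2 * p + 2 := by omega
    have ed : j + 1 + p + 2 - (j + 1 + 1) = p + 1 := by omega
    have ee : 2 * (j + 1 + p) + 1 - (j + 1) = j + 2 * p + 2 := by omega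
    have ef : j + 1 + p - (j + 1) = p := by omega
    rw [ea, eb, ec, ed, ee, ef]
    have hA : (((2 * (p + 1))‼ : ℕ) : ℚ) = 2 ^ (p + 1) * ((p + 1)! : ℚ) := by
      rw [Nat.doubleFactorial_two_mul]; push_cast; ring
    have hB : ((2 * (j + 1 + p) + 1)! : ℚ)
        = (((2 * (j + 1 + p) + 1)‼ : ℕ) : ℚ) * 2 ^ (j + 1 + p) * ((j + 1 + p)! : ℚ) := by
      rw [Nat.factorial_eq_mul_doubleFactorial, Nat.doubleFactorial_two_mul]
      push_cast; ring
    have hC : ((j + 2 * p + 3)! : ℚ) = (j + 2 * p + 3) * ((j + 2 * p + 2)! : ℚ) := by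
      rw [show j + 2 * p + 3 = (j + 2 * p + 2) + 1 from rfl, Nat.factorial_succ]
      push_cast; ring
    have hD : ((p + 1)! : ℚ) = (p + 1) * (p ! : ℚ) := by
      rw [Nat.factorial_succ]; push_cast; ring
    have n1 : (((2 * (j + 1 + p) + 1)‼ : ℕ) : ℚ) ≠ 0 := by positivity
    have n2 : ((j + 1 + p)! : ℚ) ≠ 0 := by positivity
    have n3 : (p ! : ℚ) ≠ 0 := by positivity
    have n4 : ((j + 2 * p + 2)! : ℚ) ≠ 0 := by positivity
    rw [hC, hA, hB, hD]
    push_cast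
    field_simp
    ring

theorem sum_ci_formula (n k : ℕ) (hn : 3 ≤ n) (hk1 : 1 ≤ k) (hk2 : k ≤ n - 2) :
    (1 / (((2 * n - 5)‼ : ℕ) : ℚ)) *
        ∑ i ∈ Finset.Icc 1 k,
          ((i : ℚ) - 1) * ((2 * n - i - 4)! : ℚ) / (((2 * (n - i - 1))‼ : ℕ) : ℚ)
      = 1 - 2 ^ k * ((n - 3)! : ℚ) * ((2 * n - k - 4)! : ℚ)
          / (2 * ((2 * n - 5)! : ℚ) * ((n - k - 2)! : ℚ)) := by
  obtain ⟨m, rfl⟩ : ∃ m, n = m + 3 := ⟨n - 3, by omega⟩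
  obtain ⟨j, rfl⟩ : ∃ j, k = j + 1 := ⟨k - 1, by omega⟩
  have hj : j ≤ m := by omega
  have := sum_ci_key m j hj
  have e1 : 2 * (m + 3) - 5 = 2 * m + 1 := by omega
  have e2 : m + 3 - 3 = m := by omega
  have e3 : 2 * (m + 3) - (j + 1) - 4 = 2 * m + 1 - j := by omega
  have e4 : m + 3 - (j + 1) - 2 = m - j := by omega
  rw [e1, e2, e3, e4]
  rw [← this]
  congr 1
  apply Finset.sum_congr rfl
  intro i hi
  simp only [Finset.mem_Icc] at hi
  have e5 : 2 * (m + 3) - i - 4 = 2 * m + 2 - i := by omega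
  have e6 : m + 3 - i - 1 = m + 2 - i := by omega
  rw [e5, e6]
end

section
/- For every n ≥ 3 and k with 1 ≤ k ≤ n-2, ∑_{i=1}^{k-1} i·2^{i+1}·(2n-i-5)!/(n-i-2)! = (4+k-2n)·2^{k+1}·(2n-k-5)!/(n-k-2)! + 4·(2n-5)!/(n-3)!. -/
open Nat Finset

theorem sum_reindexed (n k : ℕ) (hn : 3 ≤ n) (hk1 : 1 ≤ k) (hk2 : k ≤ n - 2) :
    ∑ i ∈ Finset.Icc 2 k,
        ((i : ℚ) - 1) * 2 ^ i * ((2 * n - i - 4)! : ℚ) / ((n - i - 1)! : ℚ)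
      = (4 + (k : ℚ) - 2 * n) * 2 ^ (k + 1) * ((2 * n - k - 5)! : ℚ) / ((n - k - 2)! : ℚ)
        + 4 * ((2 * n - 5)! : ℚ) / ((n - 3)! : ℚ) := by
  induction k, hk1 using Nat.le_induction with
  | base =>
    obtain ⟨m, rfl⟩ : ∃ m, n = m + 3 := ⟨n - 3, by omega⟩
    rw [show Finset.Icc 2 1 = ∅ from rfl, Finset.sum_empty,
        show 2 * (m + 3) - 1 - 5 = 2 * m from by omega,
        show (m + 3) - 1 - 2 = m from by omega,
        show 2 * (m + 3) - 5 = 2 * m + 1 from by omega,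
        show (m + 3) - 3 = m from by omega,
        Nat.factorial_succ]
    have hm : ((m)! : ℚ) ≠ 0 := Nat.cast_ne_zero.mpr (Nat.factorial_ne_zero m)
    field_simp
    push_cast
    ring
  | succ k hk ih =>
    have hk' : k ≤ n - 2 := by omega
    rw [Finset.sum_Icc_succ_top (by omega : 2 ≤ k + 1), ih hk']
    obtain ⟨a, rfl⟩ : ∃ a, n = k + a + 3 := ⟨n - k - 3, by omega⟩
    rw [show 2 * (k + a + 3) - (k + 1) - 5 = k + 2 * a from by omega,
        show (k + a + 3) - (k + 1) - 2 = a from by omega,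
        show 2 * (k + a + 3) - ↑(k + 1) - 4 = (k + 2 * a) + 1 from by omega,
        show (k + a + 3) - ↑(k + 1) - 1 = a + 1 from by omega,
        show 2 * (k + a + 3) - k - 5 = (k + 2 * a) + 1 from by omega,
        show (k + a + 3) - k - 2 = a + 1 from by omega,
        Nat.factorial_succ, Nat.factorial_succ]
    have h1 : (((k + 2 * a)!) : ℚ) ≠ 0 := Nat.cast_ne_zero.mpr (Nat.factorial_ne_zero _)
    have h2 : ((a !) : ℚ) ≠ 0 := Nat.cast_ne_zero.mpr (Nat.factorial_ne_zero _)
    have h3 : (((k + a + 3) - 3)! : ℚ) ≠ 0 := Nat.cast_ne_zero.mpr (Nat.factorial_ne_zero _)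
    push_cast
    field_simp
    ring
end

section
/- Let T_n denote the number of fully resolved unrooted phylogenetic trees with n labeled leaves and let c_i denote the number of such trees in which leaves 1 and 2 are at distance i. Then ∑_{i=1}^{n-1} c_i = T_n, i.e., ∑_{i=1}^{n-2} (i-1)·(2n-i-4)!/(2(n-i-1))!! + (n-2)! = (2n-5)!! for all n ≥ 3. -/
open Nat Finset

private lemma aux_term (k b : ℕ) :
    (k : ℚ) * ((k + 2 * b + 1)! : ℚ) / (((2 * b + 2)‼ : ℕ) : ℚ)
      = 2 * ((b : ℚ) + 2) * ((k + 2 * b + 2)! : ℚ) / (((2 * b + 4)‼ : ℕ) : ℚ)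
        - 2 * ((b : ℚ) + 1) * ((k + 2 * b + 1)! : ℚ) / (((2 * b + 2)‼ : ℕ) : ℚ) := by
  have h1 : (2 * b + 4)‼ = (2 * b + 4) * (2 * b + 2)‼ := by
    have := Nat.doubleFactorial_add_two (2 * b + 2)
    simpa [show 2 * b + 2 + 2 = 2 * b + 4 by ring] using this
  have h2 : (k + 2 * b + 2)! = (k + 2 * b + 2) * (k + 2 * b + 1)! := by
    have := Nat.factorial_succ (k + 2 * b + 1)
    simpa [show k + 2 * b + 1 + 1 = k + 2 * b + 2 by ring] using this
  have hd : (((2 * b + 2)‼ : ℕ) : ℚ) ≠ 0 := by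
    exact_mod_cast (Nat.doubleFactorial_pos _).ne'
  rw [h1, h2]
  push_cast
  field_simp
  ring

private lemma aux_G0 (m : ℕ) :
    2 * ((m : ℚ) + 2) * ((2 * m + 2)! : ℚ) / (((2 * m + 4)‼ : ℕ) : ℚ)
      = (((2 * m + 1)‼ : ℕ) : ℚ) := by
  have h1 : (2 * m + 4)‼ = (2 * m + 4) * (2 * m + 2)‼ := by
    have := Nat.doubleFactorial_add_two (2 * m + 2)
    simpa [show 2 * m + 2 + 2 = 2 * m + 4 by ring] using this
  have h2 : (2 * m + 2)! = (2 * m + 2)‼ * (2 * m + 1)‼ := by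
    have := Nat.factorial_eq_mul_doubleFactorial (2 * m + 1)
    simpa [show 2 * m + 1 + 1 = 2 * m + 2 by ring] using this
  have hd : (((2 * m + 2)‼ : ℕ) : ℚ) ≠ 0 := by
    exact_mod_cast (Nat.doubleFactorial_pos _).ne'
  rw [h1, h2]
  push_cast
  field_simp
  ring

theorem sum_ci_eq_total (n : ℕ) (hn : 3 ≤ n) :
    (∑ i ∈ Finset.Icc 1 (n - 2),
        ((i : ℚ) - 1) * ((2 * n - i - 4)! : ℚ) / (((2 * (n - i - 1))‼ : ℕ) : ℚ))
      + ((n - 2)! : ℚ) = (((2 * n - 5)‼ : ℕ) : ℚ) := by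
  obtain ⟨m, rfl⟩ : ∃ m, n = m + 3 := ⟨n - 3, by omega⟩
  -- the telescoping function
  set G : ℕ → ℚ := fun k =>
    2 * ((m : ℚ) + 2 - k) * (((2 * m + 2 - k)! : ℕ) : ℚ)
      / (((2 * (m + 2 - k))‼ : ℕ) : ℚ) with hG
  have hsum : (∑ i ∈ Finset.Icc 1 (m + 3 - 2),
        ((i : ℚ) - 1) * ((2 * (m + 3) - i - 4)! : ℚ)
          / (((2 * (m + 3 - i - 1))‼ : ℕ) : ℚ))
      = ∑ k ∈ Finset.range (m + 1), (G k - G (k + 1)) := by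
    rw [show m + 3 - 2 = m + 1 by omega, ← Finset.Ico_add_one_right_eq_Icc,
      Finset.sum_Ico_eq_sum_range]
    rw [show m + 1 + 1 - 1 = m + 1 by omega]
    refine Finset.sum_congr rfl ?_
    intro k hk
    rw [Finset.mem_range] at hk
    have hk' : k ≤ m := by omega
    set b := m - k with hb
    have hmb : m = k + b := by omega
    have e1 : 2 * (m + 3) - (1 + k) - 4 = k + 2 * b + 1 := by omega
    have e2 : m + 3 - (1 + k) - 1 = b + 1 := by omega
    have e3 : 2 * m + 2 - k = k + 2 * b + 2 := by omega
    have e4 : m + 2 - k = b + 2 := by omega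
    have e5 : 2 * m + 2 - (k + 1) = k + 2 * b + 1 := by omega
    have e6 : m + 2 - (k + 1) = b + 1 := by omega
    rw [e1, e2]
    simp only [hG, e3, e4, e5, e6]
    have hcast : ((1 + k : ℕ) : ℚ) - 1 = (k : ℚ) := by push_cast; ring
    rw [hcast]
    have hc2 : ((m : ℚ) + 2 - k) = (b : ℚ) + 2 := by
      rw [hmb]; push_cast; ring
    have hc3 : ((m : ℚ) + 2 - (k + 1 : ℕ)) = (b : ℚ) + 1 := by
      rw [hmb]; push_cast; ring
    rw [hc2, hc3]
    have := aux_term k b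
    rw [show 2 * b + 2 = 2 * (b + 1) by ring, show 2 * b + 4 = 2 * (b + 2) by ring] at this
    convert this using 3 <;> push_cast <;> ring
  rw [hsum, Finset.sum_range_sub' G]
  have hG0 : G 0 = (((2 * m + 1)‼ : ℕ) : ℚ) := by
    simp only [hG]
    have := aux_G0 m
    rw [show 2 * m + 4 = 2 * (m + 2) by ring] at this
    convert this using 3 <;> push_cast <;> ring <;> omega
  have hGm : G (m + 1) = ((m + 1)! : ℚ) := by
    simp only [hG]
    rw [show 2 * m + 2 - (m + 1) = m + 1 by omega,
        show m + 2 - (m + 1) = 1 by omega]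
    have hcast : ((m : ℚ) + 2 - ((m + 1 : ℕ) : ℚ)) = 1 := by push_cast; ring
    rw [hcast]
    norm_num [Nat.doubleFactorial]
  rw [hG0, hGm, show m + 3 - 2 = m + 1 by omega, show 2 * (m + 3) - 5 = 2 * m + 1 by omega]
  ring
end

section
/- For the function B(x) = 1 − √(1−2x) and integer i ≥ 1, the Taylor expansion of B(x)^{i-1} at x = 0 has its coefficient of x^{i-1+l} equal to (i-1)(i+l)(i+l+1)···(i+2l-2)/(2l)!! for each l ≥ 1, and the coefficient of x^{i-1} equal to 1. -/
/-!
Near `0` we have `B = x + B² / 2` and `B 0 = 0`. Multiplying by `B ^ m` gives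
`B^(m+1) = x B^m + B^(m+2) / 2`, so the Taylor coefficients `coeff m n` of `B ^ m` at `0`
satisfy `coeff (m+1) (n+1) = coeff m n + coeff (m+2) (n+1) / 2`; moreover `coeff m n = 0` for
`n < m` and `coeff 0 n = δ n 0`. These relations determine `coeff m (m + l)` by induction on `l`
and then on `m`, and the closed form satisfies the same recurrence.
-/

open Nat Finset Filter Topology

section IteratedDeriv

variable {𝕜 : Type*} [NontriviallyNormedField 𝕜] {f : 𝕜 → 𝕜} {x : 𝕜}

theorem iteratedDeriv_succ_fun_id_mul {n : ℕ} (hf : ContDiffAt 𝕜 (n + 1 : ℕ) f x) :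
    iteratedDeriv (n + 1) (fun y => y * f y) x
      = x * iteratedDeriv (n + 1) f x + (n + 1) * iteratedDeriv n f x := by
  rw [iteratedDeriv_fun_mul (f := fun y => y) contDiffAt_fun_id hf, sum_range_succ',
    sum_range_succ']
  simp [iteratedDeriv_fun_id, add_comm]

theorem iteratedDeriv_fun_pow_eq_zero_of_lt {n m : ℕ} (hf : ContDiffAt 𝕜 n f x) (hfx : f x = 0)
    (hnm : n < m) : iteratedDeriv n (fun y => f y ^ m) x = 0 := by
  induction m generalizing n with
  | zero => omega
  | succ m ih =>
    rw [show (fun y => f y ^ (m + 1)) = fun y => f y * f y ^ m from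
      funext fun y => pow_succ' _ _, iteratedDeriv_fun_mul hf (hf.pow m)]
    refine sum_eq_zero fun i hi => ?_
    rcases i with _ | i
    · simp [hfx]
    · rw [mem_range] at hi
      rw [ih (hf.of_le (by exact_mod_cast n.sub_le (i + 1))) (by omega), mul_zero]

end IteratedDeriv

namespace TaylorCoeffBPow

noncomputable def B (x : ℝ) : ℝ := 1 - √(1 - 2 * x)

theorem B_zero : B 0 = 0 := by simp [B]

theorem contDiffAt_B {n : WithTop ℕ∞} {x : ℝ} (hx : x < 1 / 2) : ContDiffAt ℝ n B x :=
  contDiffAt_const.sub ((contDiffAt_const.sub (contDiffAt_const.mul contDiffAt_id)).sqrt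
    (by intro h; simp only [id_eq] at h; linarith))

theorem B_eq_add_sq {x : ℝ} (hx : x ≤ 1 / 2) : B x = x + B x ^ 2 / 2 := by
  have hsq := Real.sq_sqrt (show 0 ≤ 1 - 2 * x by linarith)
  unfold B
  linear_combination (-1 / 2 : ℝ) * hsq

theorem B_pow_succ_eventuallyEq (m : ℕ) :
    (fun x => B x ^ (m + 1)) =ᶠ[𝓝 0] fun x => x * B x ^ m + 2⁻¹ * B x ^ (m + 2) := by
  filter_upwards [Iic_mem_nhds (by norm_num : (0 : ℝ) < 1 / 2)] with x hx
  linear_combination B x ^ m * B_eq_add_sq hx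

noncomputable def coeff (m n : ℕ) : ℝ := iteratedDeriv n (fun x => B x ^ m) 0 / n !

theorem coeff_zero_left (n : ℕ) : coeff 0 n = if n = 0 then 1 else 0 := by
  rcases n with _ | n <;> simp [coeff, iteratedDeriv_const]

theorem coeff_eq_zero_of_lt {m n : ℕ} (h : n < m) : coeff m n = 0 := by
  rw [coeff, iteratedDeriv_fun_pow_eq_zero_of_lt (contDiffAt_B (by norm_num)) B_zero h, zero_div]

theorem coeff_succ_succ (m n : ℕ) :
    coeff (m + 1) (n + 1) = coeff m n + coeff (m + 2) (n + 1) / 2 := by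
  have hB (k : ℕ) : ContDiffAt ℝ (n + 1 : ℕ) (fun x => B x ^ k) 0 :=
    (contDiffAt_B (by norm_num)).pow k
  have hderiv : iteratedDeriv (n + 1) (fun x => B x ^ (m + 1)) 0
      = (n + 1) * iteratedDeriv n (fun x => B x ^ m) 0
        + 2⁻¹ * iteratedDeriv (n + 1) (fun x => B x ^ (m + 2)) 0 := by
    rw [(B_pow_succ_eventuallyEq m).iteratedDeriv_eq,
      iteratedDeriv_fun_add (contDiffAt_fun_id.mul (hB m)) (contDiffAt_const.mul (hB (m + 2))),
      iteratedDeriv_succ_fun_id_mul (hB m), iteratedDeriv_const_mul_field]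
    ring
  rw [coeff, coeff, coeff, hderiv, factorial_succ]
  push_cast
  field_simp

/-- For `(m, l) ≠ (0, 0)` this is the ballot number `m / (m + 2l) · C(m + 2l, l)`, divided by
`2 ^ l`. -/
noncomputable def ballot : ℕ → ℕ → ℝ
  | _, 0 => 1
  | m, l + 1 => m * (∏ t ∈ range l, ((m : ℝ) + l + 2 + t)) / ((2 * (l + 1))‼ : ℕ)

theorem ballot_succ_succ (m l : ℕ) :
    ballot (m + 1) (l + 1) = ballot m (l + 1) + ballot (m + 2) l / 2 := by
  rcases l with _ | l
  · simp only [ballot, range_zero, prod_empty, doubleFactorial]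
    push_cast
    ring
  · set Q := ∏ t ∈ range l, ((m : ℝ) + l + 4 + t)
    have hQ₁ : ∏ t ∈ range (l + 1), (((m + 1 : ℕ) : ℝ) + (l + 1 : ℕ) + 2 + t)
        = Q * (m + 2 * l + 4) := by
      rw [prod_range_succ]
      push_cast
      congr 1
      · exact prod_congr rfl fun t _ => by ring
      · ring
    have hQ₀ : ∏ t ∈ range (l + 1), ((m : ℝ) + (l + 1 : ℕ) + 2 + t) = (m + l + 3) * Q := by
      rw [prod_range_succ', mul_comm]
      push_cast
      congr 1
      · ring
      · exact prod_congr rfl fun t _ => by ring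
    have hQ₂ : ∏ t ∈ range l, (((m + 2 : ℕ) : ℝ) + l + 2 + t) = Q :=
      prod_congr rfl fun t _ => by push_cast; ring
    have hdf : (2 * (l + 1 + 1))‼ = (2 * l + 4) * (2 * (l + 1))‼ := by
      rw [show 2 * (l + 1 + 1) = 2 * (l + 1) + 2 by ring, doubleFactorial_add_two]
      ring
    have hdf_pos : (0 : ℝ) < ((2 * (l + 1))‼ : ℕ) := by exact_mod_cast doubleFactorial_pos _
    rw [ballot, ballot, ballot, hQ₁, hQ₀, hQ₂, hdf]
    push_cast
    field_simp
    ring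

theorem coeff_add_eq_ballot (m l : ℕ) : coeff m (m + l) = ballot m l := by
  induction l generalizing m with
  | zero =>
    rw [add_zero]
    induction m with
    | zero => simp [coeff_zero_left, ballot]
    | succ m ih => rw [coeff_succ_succ, ih, coeff_eq_zero_of_lt (by omega)]; simp [ballot]
  | succ l ihl =>
    induction m with
    | zero => simp [coeff_zero_left, ballot]
    | succ m ihm =>
      rw [show m + 1 + (l + 1) = m + (l + 1) + 1 by omega, coeff_succ_succ, ihm,
        show m + (l + 1) + 1 = m + 2 + l by omega, ihl, ballot_succ_succ]

end TaylorCoeffBPow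

/-- Taylor coefficients of `B(x)^(i-1)` at `0`, where `B(x) = 1 - √(1 - 2x)`: the coefficient
of `x^(i-1)` is `1`, and for `l ≥ 1` the coefficient of `x^(i-1+l)` is
`(i-1)·(i+l)(i+l+1)⋯(i+2l-2)/(2l)‼`. -/
theorem taylor_coeff_B_pow (i : ℕ) (hi : 1 ≤ i) :
    (iteratedDeriv (i - 1) (fun x : ℝ => (1 - Real.sqrt (1 - 2 * x)) ^ (i - 1)) 0
        / (((i - 1)! : ℕ) : ℝ) = 1) ∧
    ∀ l : ℕ, 1 ≤ l →
      iteratedDeriv (i - 1 + l) (fun x : ℝ => (1 - Real.sqrt (1 - 2 * x)) ^ (i - 1)) 0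
          / (((i - 1 + l)! : ℕ) : ℝ)
        = ((i : ℝ) - 1) * (∏ t ∈ Finset.range (l - 1), ((i : ℝ) + l + t))
            / (((2 * l)‼ : ℕ) : ℝ) := by
  obtain ⟨m, rfl⟩ : ∃ m, i = m + 1 := ⟨i - 1, by omega⟩
  have h := TaylorCoeffBPow.coeff_add_eq_ballot m
  simp only [TaylorCoeffBPow.coeff, TaylorCoeffBPow.B, Nat.add_sub_cancel] at h ⊢
  refine ⟨by simpa [TaylorCoeffBPow.ballot] using h 0, fun l hl => ?_⟩
  obtain ⟨k, rfl⟩ : ∃ k, l = k + 1 := ⟨l - 1, by omega⟩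
  rw [h, TaylorCoeffBPow.ballot, Nat.add_sub_cancel]
  push_cast
  congr 2
  · ring
  · exact prod_congr rfl fun t _ => by ring
end

section
/- Define median(n) as the largest natural number k ≤ n-2 such that 2^k·(n-3)!·(2n-k-4)! ≥ (2n-5)!·(n-k-2)!. Then median(n)/√(4·ln(2)·n) → 1 as n → ∞. -/
open Nat Filter

/-- The median of the distance between two leaves in a fully resolved unrooted phylogenetic
tree with `n` leaves. -/
noncomputable def median (n : ℕ) : ℕ :=
  sSup {k : ℕ | k ≤ n - 2 ∧ (2 * n - 5)! * (n - k - 2)! ≤ 2 ^ k * (n - 3)! * (2 * n - k - 4)!}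


section Aux
open Finset

private lemma asc_prod (m k : ℕ) :
    ((m + 1).ascFactorial k : ℝ) = ∏ i ∈ range k, ((m : ℝ) + 1 + i) := by
  induction k with
  | zero => simp
  | succ k ih => rw [Nat.ascFactorial_succ, prod_range_succ, ← ih]; push_cast; ring

private lemma sum_d (m : ℕ) : ∑ i ∈ range m, ((m : ℝ) - i) = (m + 1) * m / 2 := by
  induction m with
  | zero => simp
  | succ m ih =>
    rw [Finset.sum_range_succ]
    have h : ∀ i ∈ range m, ((m + 1 : ℕ) : ℝ) - i = ((m : ℝ) - i) + 1 := by
      intro i _; push_cast; ring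
    rw [Finset.sum_congr rfl h, Finset.sum_add_distrib, ih, Finset.sum_const]
    simp; ring

private lemma exp_sum_d (m : ℕ) (c : ℝ) (hc : 0 < c) :
    ∏ i ∈ range m, Real.exp (-(((m : ℝ) - i) / c)) =
      Real.exp (-((m + 1) * m) / (2 * c)) := by
  rw [← Real.exp_sum]
  congr 1
  have h : ∀ i ∈ range m, -(((m : ℝ) - i) / c) = ((m : ℝ) - i) * (-1 / c) := by
    intro i _; ring
  rw [Finset.sum_congr rfl h, ← Finset.sum_mul, sum_d]
  field_simp

private lemma prod_upper (a m : ℕ) :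
    ∏ i ∈ range m, (2 * ((a : ℝ) + 1 + i)) ≤
      Real.exp (-((m + 1) * m) / (4 * ((a : ℝ) + m + 3))) *
        ∏ i ∈ range m, ((2 * a + m + 2 : ℝ) + i) := by
  have key : ∀ i ∈ range m, 2 * ((a : ℝ) + 1 + i) ≤
      Real.exp (-(((m : ℝ) - i) / (2 * ((a : ℝ) + m + 3)))) * ((2 * a + m + 2 : ℝ) + i) := by
    intro i hi
    have him : (i : ℝ) ≤ (m : ℝ) - 1 := by
      have := Finset.mem_range.1 hi
      have : (i : ℝ) + 1 ≤ m := by exact_mod_cast this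
      linarith
    set D : ℝ := (2 * a + m + 2 : ℝ) + i with hD
    set d : ℝ := (m : ℝ) - i with hd
    set c : ℝ := 2 * ((a : ℝ) + m + 3) with hc
    have hDpos : 0 < D := by positivity
    have hd0 : 0 ≤ d := by rw [hd]; linarith
    have hDc : D ≤ c := by rw [hD, hc]; linarith
    have hstep : 1 - d / D ≤ Real.exp (-(d / D)) := by
      have := Real.add_one_le_exp (-(d / D)); linarith
    have hN : 2 * ((a : ℝ) + 1 + i) = D * (1 - d / D) := by
      field_simp [hD, hd]; ring
    have hmono : Real.exp (-(d / D)) ≤ Real.exp (-(d / c)) := by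
      apply Real.exp_le_exp.2
      have : d / c ≤ d / D := by
        apply div_le_div_of_nonneg_left hd0 hDpos hDc
      linarith
    calc 2 * ((a : ℝ) + 1 + i) = D * (1 - d / D) := hN
      _ ≤ D * Real.exp (-(d / D)) := by
          apply mul_le_mul_of_nonneg_left hstep (le_of_lt hDpos)
      _ ≤ D * Real.exp (-(d / c)) := by
          apply mul_le_mul_of_nonneg_left hmono (le_of_lt hDpos)
      _ = Real.exp (-(d / c)) * D := by ring
  calc ∏ i ∈ range m, (2 * ((a : ℝ) + 1 + i))
      ≤ ∏ i ∈ range m, (Real.exp (-(((m : ℝ) - i) / (2 * ((a : ℝ) + m + 3)))) *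
          ((2 * a + m + 2 : ℝ) + i)) := by
        apply Finset.prod_le_prod (fun i _ => by positivity) key
    _ = (∏ i ∈ range m, Real.exp (-(((m : ℝ) - i) / (2 * ((a : ℝ) + m + 3))))) *
          ∏ i ∈ range m, ((2 * a + m + 2 : ℝ) + i) := Finset.prod_mul_distrib
    _ = Real.exp (-((m + 1) * m) / (4 * ((a : ℝ) + m + 3))) *
          ∏ i ∈ range m, ((2 * a + m + 2 : ℝ) + i) := by
        rw [exp_sum_d m _ (by positivity)]
        ring_nf

private lemma prod_lower (a m : ℕ) :
    Real.exp (-((m + 1) * m) / (4 * ((a : ℝ) + 1))) *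
        ∏ i ∈ range m, ((2 * a + m + 2 : ℝ) + i) ≤
      ∏ i ∈ range m, (2 * ((a : ℝ) + 1 + i)) := by
  have key : ∀ i ∈ range m,
      Real.exp (-(((m : ℝ) - i) / (2 * ((a : ℝ) + 1)))) * ((2 * a + m + 2 : ℝ) + i) ≤
        2 * ((a : ℝ) + 1 + i) := by
    intro i hi
    have him : (i : ℝ) ≤ (m : ℝ) - 1 := by
      have := Finset.mem_range.1 hi
      have : (i : ℝ) + 1 ≤ m := by exact_mod_cast this
      linarith
    set N : ℝ := 2 * ((a : ℝ) + 1 + i) with hNdef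
    set d : ℝ := (m : ℝ) - i with hd
    have hNpos : 0 < N := by positivity
    have hd0 : 0 ≤ d := by rw [hd]; linarith
    have hcN : 2 * ((a : ℝ) + 1) ≤ N := by
      rw [hNdef]
      have : (0:ℝ) ≤ i := Nat.cast_nonneg i
      linarith
    have hD : (2 * a + m + 2 : ℝ) + i = (1 + d / N) * N := by
      field_simp [hd]; ring
    have hmono : Real.exp (-(d / (2 * ((a : ℝ) + 1)))) ≤ Real.exp (-(d / N)) := by
      apply Real.exp_le_exp.2
      have : d / N ≤ d / (2 * ((a : ℝ) + 1)) :=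
        div_le_div_of_nonneg_left hd0 (by positivity) hcN
      linarith
    have hstep : 1 + d / N ≤ Real.exp (d / N) := by
      have := Real.add_one_le_exp (d / N); linarith
    calc Real.exp (-(d / (2 * ((a : ℝ) + 1)))) * ((2 * a + m + 2 : ℝ) + i)
        ≤ Real.exp (-(d / N)) * ((2 * a + m + 2 : ℝ) + i) := by
          apply mul_le_mul_of_nonneg_right hmono (by positivity)
      _ = Real.exp (-(d / N)) * ((1 + d / N) * N) := by rw [hD]
      _ ≤ Real.exp (-(d / N)) * (Real.exp (d / N) * N) := by
          apply mul_le_mul_of_nonneg_left _ (Real.exp_nonneg _)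
          apply mul_le_mul_of_nonneg_right hstep (le_of_lt hNpos)
      _ = N := by rw [← mul_assoc, ← Real.exp_add]; simp
  calc Real.exp (-((m + 1) * m) / (4 * ((a : ℝ) + 1))) *
        ∏ i ∈ range m, ((2 * a + m + 2 : ℝ) + i)
      = (∏ i ∈ range m, Real.exp (-(((m : ℝ) - i) / (2 * ((a : ℝ) + 1))))) *
        ∏ i ∈ range m, ((2 * a + m + 2 : ℝ) + i) := by
        rw [exp_sum_d m _ (by positivity)]
        ring_nf
    _ = ∏ i ∈ range m, (Real.exp (-(((m : ℝ) - i) / (2 * ((a : ℝ) + 1)))) *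
          ((2 * a + m + 2 : ℝ) + i)) := Finset.prod_mul_distrib.symm
    _ ≤ ∏ i ∈ range m, (2 * ((a : ℝ) + 1 + i)) := by
        apply Finset.prod_le_prod (fun i _ => by positivity) key

private lemma cond_iff (a k : ℕ) (hk : 1 ≤ k) :
    ((2 * (a + k + 2) - 5)! * ((a + k + 2) - k - 2)! ≤
      2 ^ k * ((a + k + 2) - 3)! * (2 * (a + k + 2) - k - 4)!) ↔
    ((2 * a + k + 1).ascFactorial (k - 1) ≤ 2 ^ k * (a + 1).ascFactorial (k - 1)) := by
  obtain ⟨m, rfl⟩ : ∃ m, k = m + 1 := ⟨k - 1, by omega⟩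
  have e1 : 2 * (a + (m + 1) + 2) - 5 = (2 * a + m + 1) + m := by omega
  have e2 : (a + (m + 1) + 2) - (m + 1) - 2 = a := by omega
  have e3 : (a + (m + 1) + 2) - 3 = a + m := by omega
  have e4 : 2 * (a + (m + 1) + 2) - (m + 1) - 4 = 2 * a + m + 1 := by omega
  have e5 : 2 * a + (m + 1) + 1 = (2 * a + m + 1) + 1 := by omega
  have e6 : m + 1 - 1 = m := by omega
  rw [e1, e2, e3, e4, e5, e6,
    ← Nat.factorial_mul_ascFactorial (2 * a + m + 1) m,
    ← Nat.factorial_mul_ascFactorial a m]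
  have hpos : 0 < (2 * a + m + 1)! * a ! := by positivity
  constructor
  · intro h
    have h2 : ((2 * a + m + 1)! * a !) * ((2 * a + m + 1 + 1).ascFactorial m) ≤
        ((2 * a + m + 1)! * a !) * (2 ^ (m + 1) * (a + 1).ascFactorial m) := by
      calc ((2 * a + m + 1)! * a !) * ((2 * a + m + 1 + 1).ascFactorial m)
          = (2 * a + m + 1)! * (2 * a + m + 1 + 1).ascFactorial m * a ! := by ring
        _ ≤ 2 ^ (m + 1) * (a ! * (a + 1).ascFactorial m) * (2 * a + m + 1)! := h
        _ = ((2 * a + m + 1)! * a !) * (2 ^ (m + 1) * (a + 1).ascFactorial m) := by ring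
    exact Nat.le_of_mul_le_mul_left h2 hpos
  · intro h
    calc (2 * a + m + 1)! * (2 * a + m + 1 + 1).ascFactorial m * a !
        = ((2 * a + m + 1)! * a !) * ((2 * a + m + 1 + 1).ascFactorial m) := by ring
      _ ≤ ((2 * a + m + 1)! * a !) * (2 ^ (m + 1) * (a + 1).ascFactorial m) :=
          Nat.mul_le_mul_left _ h
      _ = 2 ^ (m + 1) * (a ! * (a + 1).ascFactorial m) * (2 * a + m + 1)! := by ring

private lemma two_pow_prod (a m : ℕ) :
    (2:ℝ) ^ (m + 1) * ∏ i ∈ range m, ((a : ℝ) + 1 + i) =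
      2 * ∏ i ∈ range m, (2 * ((a : ℝ) + 1 + i)) := by
  rw [Finset.prod_mul_distrib, Finset.prod_const, Finset.card_range]
  ring

private lemma prodD_pos (a m : ℕ) : 0 < ∏ i ∈ range m, ((2 * a + m + 2 : ℝ) + i) :=
  Finset.prod_pos fun i _ => by positivity

private lemma cond_fail (a m : ℕ)
    (h : 4 * ((a : ℝ) + m + 3) * Real.log 2 < ((m : ℝ) + 1) * m) :
    ¬ ((2 * a + m + 2).ascFactorial m ≤ 2 ^ (m + 1) * (a + 1).ascFactorial m) := by
  intro hle
  have hcast : (((2 * a + m + 2).ascFactorial m : ℕ) : ℝ) ≤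
      ((2 ^ (m + 1) * (a + 1).ascFactorial m : ℕ) : ℝ) := Nat.cast_le.2 hle
  have h1 : (((2 * a + m + 2).ascFactorial m : ℕ) : ℝ) =
      ∏ i ∈ range m, ((2 * a + m + 2 : ℝ) + i) := by
    have := asc_prod (2 * a + m + 1) m
    rw [show 2 * a + m + 2 = (2 * a + m + 1) + 1 from rfl, this]
    apply Finset.prod_congr rfl
    intro i _; push_cast; ring
  have h2 : (((2 ^ (m + 1) * (a + 1).ascFactorial m : ℕ) : ℝ)) =
      2 * ∏ i ∈ range m, (2 * ((a : ℝ) + 1 + i)) := by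
    rw [← two_pow_prod]
    push_cast [asc_prod a m]
    ring
  rw [h1, h2] at hcast
  have hP := prodD_pos a m
  have hexp : Real.exp (-((m + 1) * m) / (4 * ((a : ℝ) + m + 3))) < 1 / 2 := by
    rw [show (1:ℝ)/2 = Real.exp (Real.log (1/2)) from (Real.exp_log (by norm_num)).symm]
    apply Real.exp_lt_exp.2
    rw [Real.log_div one_ne_zero (by norm_num), Real.log_one]
    have ha3 : (0:ℝ) < 4 * ((a : ℝ) + m + 3) := by positivity
    rw [div_lt_iff₀ ha3]
    nlinarith [h]
  have := prod_upper a m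
  nlinarith [this, hcast, hP, hexp, Real.exp_pos (-((m + 1) * m) / (4 * ((a : ℝ) + m + 3)))]

private lemma cond_holds (a m : ℕ)
    (h : ((m : ℝ) + 1) * m ≤ 4 * ((a : ℝ) + 1) * Real.log 2) :
    (2 * a + m + 2).ascFactorial m ≤ 2 ^ (m + 1) * (a + 1).ascFactorial m := by
  have key : (((2 * a + m + 2).ascFactorial m : ℕ) : ℝ) ≤
      ((2 ^ (m + 1) * (a + 1).ascFactorial m : ℕ) : ℝ) := by
    have h1 : (((2 * a + m + 2).ascFactorial m : ℕ) : ℝ) =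
        ∏ i ∈ range m, ((2 * a + m + 2 : ℝ) + i) := by
      have := asc_prod (2 * a + m + 1) m
      rw [show 2 * a + m + 2 = (2 * a + m + 1) + 1 from rfl, this]
      apply Finset.prod_congr rfl
      intro i _; push_cast; ring
    have h2 : (((2 ^ (m + 1) * (a + 1).ascFactorial m : ℕ) : ℝ)) =
        2 * ∏ i ∈ range m, (2 * ((a : ℝ) + 1 + i)) := by
      rw [← two_pow_prod]
      push_cast [asc_prod a m]
      ring
    rw [h1, h2]
    have hlow := prod_lower a m
    have hexp : Real.exp (-((m + 1) * m) / (4 * ((a : ℝ) + 1))) ≥ 1 / 2 := by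
      rw [show (1:ℝ)/2 = Real.exp (Real.log (1/2)) from (Real.exp_log (by norm_num)).symm]
      apply Real.exp_le_exp.2
      rw [Real.log_div one_ne_zero (by norm_num), Real.log_one]
      have ha1 : (0:ℝ) < 4 * ((a : ℝ) + 1) := by positivity
      rw [le_div_iff₀ ha1]
      nlinarith [h]
    have hPD := prodD_pos a m
    nlinarith [hlow, hexp, hPD]
  exact_mod_cast key

private lemma median_bdd (n : ℕ) :
    BddAbove {k : ℕ | k ≤ n - 2 ∧
      (2 * n - 5)! * (n - k - 2)! ≤ 2 ^ k * (n - 3)! * (2 * n - k - 4)!} :=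
  ⟨n - 2, fun _ hk => hk.1⟩

private lemma one_mem (n : ℕ) (hn : 4 ≤ n) :
    1 ∈ {k : ℕ | k ≤ n - 2 ∧
      (2 * n - 5)! * (n - k - 2)! ≤ 2 ^ k * (n - 3)! * (2 * n - k - 4)!} := by
  constructor
  · omega
  · have e1 : n - 1 - 2 = n - 3 := by omega
    have e2 : 2 * n - 1 - 4 = 2 * n - 5 := by omega
    rw [e1, e2, pow_one]
    calc (2 * n - 5)! * (n - 3)! = 1 * ((n - 3)! * (2 * n - 5)!) := by ring
      _ ≤ 2 * ((n - 3)! * (2 * n - 5)!) := by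
          apply Nat.mul_le_mul_right; omega
      _ = 2 * (n - 3)! * (2 * n - 5)! := by ring

private lemma one_le_median (n : ℕ) (hn : 4 ≤ n) : 1 ≤ median n :=
  le_csSup (median_bdd n) (one_mem n hn)

private lemma median_mem (n : ℕ) (hn : 4 ≤ n) : median n ∈
    {k : ℕ | k ≤ n - 2 ∧
      (2 * n - 5)! * (n - k - 2)! ≤ 2 ^ k * (n - 3)! * (2 * n - k - 4)!} :=
  Nat.sSup_mem ⟨1, one_mem n hn⟩ (median_bdd n)

private lemma median_upper (n : ℕ) (hn : 4 ≤ n) :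
    ((median n : ℝ)) * ((median n : ℝ) - 1) ≤ 4 * (n : ℝ) * Real.log 2 := by
  by_contra hlt
  push_neg at hlt
  obtain ⟨hle, hcond⟩ := median_mem n hn
  have h1 : 1 ≤ median n := one_le_median n hn
  obtain ⟨M, hM⟩ : ∃ M, M = median n := ⟨_, rfl⟩
  rw [← hM] at hcond hle hlt h1
  obtain ⟨m, rfl⟩ : ∃ m, M = m + 1 := ⟨M - 1, by omega⟩
  obtain ⟨a, rfl⟩ : ∃ a, n = a + (m + 1) + 2 := ⟨n - (m + 1) - 2, by omega⟩
  have hc := (cond_iff a (m + 1) (by omega)).1 hcond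
  have e5 : 2 * a + (m + 1) + 1 = 2 * a + m + 2 := by omega
  have e6 : m + 1 - 1 = m := by omega
  rw [e5, e6] at hc
  refine cond_fail a m ?_ hc
  push_cast at hlt
  nlinarith [hlt]

private lemma median_lower (n k : ℕ) (hn : 4 ≤ n) (hk1 : 1 ≤ k) (hk2 : k ≤ n - 2)
    (h : (k : ℝ) * ((k : ℝ) - 1) ≤ 4 * ((n : ℝ) - k - 1) * Real.log 2) :
    k ≤ median n := by
  obtain ⟨m, rfl⟩ : ∃ m, k = m + 1 := ⟨k - 1, by omega⟩
  obtain ⟨a, rfl⟩ : ∃ a, n = a + (m + 1) + 2 := ⟨n - (m + 1) - 2, by omega⟩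
  apply le_csSup (median_bdd _)
  refine ⟨hk2, ?_⟩
  rw [cond_iff a (m + 1) (by omega)]
  have e5 : 2 * a + (m + 1) + 1 = 2 * a + m + 2 := by omega
  have e6 : m + 1 - 1 = m := by omega
  rw [e5, e6]
  apply cond_holds a m
  push_cast at h
  nlinarith [h]

set_option maxHeartbeats 2000000 in
theorem median_limit :
    Tendsto (fun n : ℕ => (median n : ℝ) / Real.sqrt (4 * Real.log 2 * n)) atTop (nhds 1) := by
  have hL : 0 < Real.log 2 := Real.log_pos (by norm_num)
  set L := Real.log 2 with hLdef
  rw [Metric.tendsto_nhds]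
  intro ε hε
  set δ := min ε 1 with hδdef
  have hδ0 : 0 < δ := lt_min hε one_pos
  have hδ1 : δ ≤ 1 := min_le_right _ _
  have hδε : δ ≤ ε := min_le_left _ _
  have E0 : ∀ᶠ n : ℕ in atTop, 4 ≤ n := eventually_ge_atTop 4
  have EN : ∀ᶠ n : ℕ in atTop,
      max ((4 / δ) ^ 2 / (4 * L)) (max (4 * L / ((δ / 4) ^ 2)) (4 / δ)) ≤ (n : ℝ) :=
    tendsto_natCast_atTop_atTop.eventually_ge_atTop _
  filter_upwards [E0, EN] with n h4 hN
  have hn1 : (4 / δ) ^ 2 / (4 * L) ≤ (n : ℝ) := le_trans (le_max_left _ _) hN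
  have hn2 : 4 * L / ((δ / 4) ^ 2) ≤ (n : ℝ) :=
    le_trans (le_trans (le_max_left _ _) (le_max_right _ _)) hN
  have hn3 : 4 / δ ≤ (n : ℝ) :=
    le_trans (le_trans (le_max_right _ _) (le_max_right _ _)) hN
  have hn4 : (4 : ℝ) ≤ (n : ℝ) := by exact_mod_cast h4
  have hn0 : (0 : ℝ) < n := by linarith
  set s := Real.sqrt (4 * L * n) with hsdef
  have hs0 : 0 ≤ s := Real.sqrt_nonneg _
  have hsq : s ^ 2 = 4 * L * n := Real.sq_sqrt (by positivity)
  have hi : 4 / δ ≤ s := by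
    rw [hsdef, Real.le_sqrt (by positivity) (by positivity)]
    rw [div_le_iff₀ (by positivity)] at hn1
    linarith
  have hii : s ≤ δ / 4 * n := by
    have hle : (4 * L * (n : ℝ)) ≤ (δ / 4 * n) ^ 2 := by
      rw [div_le_iff₀ (by positivity)] at hn2
      nlinarith [hn2, hn0]
    calc s ≤ Real.sqrt ((δ / 4 * n) ^ 2) := Real.sqrt_le_sqrt hle
      _ = δ / 4 * n := Real.sqrt_sq (by positivity)
  have hiii : (1 : ℝ) ≤ δ / 4 * n := by
    rw [div_le_iff₀ hδ0] at hn3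
    nlinarith [hn3, hδ0]
  have hs4 : (4 : ℝ) ≤ s := by
    have h44 : (4 : ℝ) ≤ 4 / δ := by
      rw [le_div_iff₀ hδ0]; nlinarith
    linarith
  have hspos : (0 : ℝ) < s := by linarith
  -- upper bound for median
  have hu := median_upper n h4
  have hm1 : (1 : ℝ) ≤ (median n : ℝ) := by exact_mod_cast one_le_median n h4
  have hmub : (median n : ℝ) ≤ s + 1 := by
    by_contra hcon
    push_neg at hcon
    nlinarith [hu, hsq, hs0, hm1, hcon]
  -- lower bound for median
  have hx0 : (0 : ℝ) ≤ (1 - δ / 2) * s := mul_nonneg (by linarith) hs0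
  obtain ⟨k, hkle, hkgt, hk1⟩ : ∃ k : ℕ, (k : ℝ) ≤ (1 - δ / 2) * s ∧
      (1 - δ / 2) * s < (k : ℝ) + 1 ∧ 1 ≤ k := by
    refine ⟨⌊(1 - δ / 2) * s⌋₊, Nat.floor_le hx0, Nat.lt_floor_add_one _, ?_⟩
    apply Nat.le_floor
    push_cast
    have h12 : (1:ℝ)/2 ≤ 1 - δ/2 := by linarith
    have hm := mul_le_mul h12 hs4 (by norm_num) (by linarith)
    linarith
  have hks : (k : ℝ) ≤ s := by
    have h := mul_nonneg hδ0.le hs0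
    linarith [hkle]
  have hdn : δ / 4 * n ≤ (n : ℝ) / 4 := by
    linarith [mul_nonneg (by linarith : (0:ℝ) ≤ 1 - δ) hn0.le]
  have hk2 : k ≤ n - 2 := by
    have hc : (k : ℝ) ≤ ((n - 2 : ℕ) : ℝ) := by
      rw [Nat.cast_sub (by omega)]
      push_cast
      linarith [hks, hii, hdn, hn4]
    exact_mod_cast hc
  have hkn : (k : ℝ) + 1 ≤ (δ - δ ^ 2 / 4) * n := by
    have hb : (k : ℝ) + 1 ≤ δ / 2 * n := by linarith [hks, hii, hiii]
    have hcc : δ / 2 * n ≤ (δ - δ ^ 2 / 4) * n := by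
      nlinarith [mul_nonneg (mul_nonneg hδ0.le (by linarith : (0:ℝ) ≤ 2 - δ)) hn0.le]
    linarith
  have hmain : (k : ℝ) * ((k : ℝ) - 1) ≤ 4 * ((n : ℝ) - k - 1) * L := by
    have hk0 : (0 : ℝ) ≤ (k : ℝ) := Nat.cast_nonneg k
    have h1 : (k : ℝ) * ((k : ℝ) - 1) ≤ (k : ℝ) ^ 2 := by nlinarith
    have h2 : (k : ℝ) ^ 2 ≤ (1 - δ / 2) ^ 2 * (4 * L * n) := by
      have hm := mul_self_le_mul_self hk0 hkle
      nlinarith [hm, hsq]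
    have h3 : (1 - δ / 2) ^ 2 * n ≤ (n : ℝ) - k - 1 := by nlinarith [hkn]
    have h5 := mul_le_mul_of_nonneg_left h3 (by positivity : (0:ℝ) ≤ 4 * L)
    nlinarith [h1, h2, h5]
  have hlow : k ≤ median n := median_lower n k h4 hk1 hk2 hmain
  have hmlb : (1 - δ / 2) * s - 1 ≤ (median n : ℝ) := by
    have : (k : ℝ) ≤ (median n : ℝ) := by exact_mod_cast hlow
    linarith
  -- conclude
  have hinv : 1 / s ≤ δ / 4 := by
    rw [div_le_div_iff₀ hspos (by norm_num)]
    rw [div_le_iff₀ hδ0] at hi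
    nlinarith [hi, hδ0]
  have hub2 : (median n : ℝ) / s ≤ 1 + δ / 4 := by
    rw [div_le_iff₀ hspos]
    rw [div_le_div_iff₀ hspos (by norm_num : (0:ℝ) < 4)] at hinv
    nlinarith [hmub, hinv]
  have hlb2 : 1 - 3 * δ / 4 ≤ (median n : ℝ) / s := by
    rw [le_div_iff₀ hspos]
    rw [div_le_div_iff₀ hspos (by norm_num : (0:ℝ) < 4)] at hinv
    nlinarith [hmlb, hinv]
  rw [Real.dist_eq, abs_lt]
  constructor
  · nlinarith [hlb2, hδ0, hδε]
  · nlinarith [hub2, hδ0, hδε]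

end Aux
end

section
/- Define median(n) as the largest k ≤ n-2 with 2^k·(n-3)!·(2n-k-4)! ≥ (2n-5)!·(n-k-2)!. Then median(n) = √(4·ln(2)·n)·(1 + O(n^{-1/2})), i.e., there exist C > 0 and N such that |median(n) − √(4 ln 2 · n)| ≤ C for all n ≥ N. -/
/-!
The defining condition is monotone in `k`, so `median n` is pinned down by exhibiting one `k`
that satisfies it and one that does not. Writing `n = b + d + 3`, the condition for `k = d + 1`
cancels to `∏_{i<d} (2b+d+2+i) ≤ 2^(d+1) ∏_{i<d} (b+1+i)`, i.e. `∏_{i<d} (1 + t_i) ≤ 2` with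
`t_i = (d-i) / (2(b+1+i))`. Squeezing `1 + t` between `exp (t / (1 + t))` and `exp t` and using
`∑_{i<d} (d-i) = d(d+1)/2`, the product is at most `2` once `d(d+1) ≤ 4 log 2 · (b+1)` and exceeds
`2` once `d(d+1) > 4 log 2 · (b+d+1)`. Both thresholds are `d = √(4 log 2 · n) + O(1)`.
-/

open Nat

open Finset Real

lemma le_mul_exp_sub_div {a c : ℝ} (ha : 0 < a) : c ≤ a * exp ((c - a) / a) := by
  have := add_one_le_exp ((c - a) / a)
  rw [div_add_one ha.ne', div_le_iff₀ ha] at this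
  linarith

lemma mul_exp_sub_div_le {a c : ℝ} (ha : 0 < a) (hc : 0 < c) : a * exp ((c - a) / c) ≤ c := by
  have hlog := one_sub_inv_le_log_of_pos (div_pos hc ha)
  rw [inv_div, one_sub_div hc.ne'] at hlog
  calc a * exp ((c - a) / c) ≤ a * exp (Real.log (c / a)) := by gcongr
    _ = c := by rw [exp_log (div_pos hc ha), mul_div_cancel₀ _ ha.ne']

lemma prod_le_prod_mul_exp_sum {ι : Type*} {s : Finset ι} {a c : ι → ℝ}
    (ha : ∀ i ∈ s, 0 < a i) (hc : ∀ i ∈ s, 0 ≤ c i) :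
    ∏ i ∈ s, c i ≤ (∏ i ∈ s, a i) * exp (∑ i ∈ s, (c i - a i) / a i) := by
  rw [exp_sum, ← prod_mul_distrib]
  exact prod_le_prod hc fun i hi => le_mul_exp_sub_div (ha i hi)

lemma prod_mul_exp_sum_le_prod {ι : Type*} {s : Finset ι} {a c : ι → ℝ}
    (ha : ∀ i ∈ s, 0 < a i) (hc : ∀ i ∈ s, 0 < c i) :
    (∏ i ∈ s, a i) * exp (∑ i ∈ s, (c i - a i) / c i) ≤ ∏ i ∈ s, c i := by
  rw [exp_sum, ← prod_mul_distrib]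
  exact prod_le_prod (fun i hi => by have := ha i hi; positivity)
    fun i hi => mul_exp_sub_div_le (ha i hi) (hc i hi)

lemma sum_range_natCast_sub (d : ℕ) : ∑ i ∈ range d, ((d : ℝ) - i) = d * (d + 1) / 2 := by
  induction d with
  | zero => simp
  | succ d ih =>
    rw [sum_range_succ']
    push_cast
    simp_rw [add_sub_add_right_eq_sub, ih]
    ring

def MedianAdmissible (n k : ℕ) : Prop :=
  (2 * n - 5)! * (n - k - 2)! ≤ 2 ^ k * (n - 3)! * (2 * n - k - 4)!

lemma MedianAdmissible.of_succ {n k : ℕ} (hk : k + 1 ≤ n - 2)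
    (h : MedianAdmissible n (k + 1)) : MedianAdmissible n k := by
  obtain ⟨c, rfl⟩ : ∃ c, n = c + k + 3 := ⟨n - k - 3, by omega⟩
  unfold MedianAdmissible at h ⊢
  rw [show 2 * (c + k + 3) - 5 = 2 * c + 2 * k + 1 by omega, show c + k + 3 - (k + 1) - 2 = c by omega,
    show c + k + 3 - 3 = c + k by omega, show 2 * (c + k + 3) - (k + 1) - 4 = 2 * c + k + 1 by omega]
    at h
  rw [show 2 * (c + k + 3) - 5 = 2 * c + 2 * k + 1 by omega, show c + k + 3 - k - 2 = c + 1 by omega,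
    show c + k + 3 - 3 = c + k by omega, show 2 * (c + k + 3) - k - 4 = 2 * c + k + 2 by omega,
    factorial_succ c, factorial_succ (2 * c + k + 1)]
  calc (2 * c + 2 * k + 1)! * ((c + 1) * c !) = (2 * c + 2 * k + 1)! * c ! * (c + 1) := by ring
    _ ≤ 2 ^ (k + 1) * (c + k)! * (2 * c + k + 1)! * (c + 1) := Nat.mul_le_mul_right _ h
    _ = 2 ^ k * (c + k)! * (2 * (c + 1) * (2 * c + k + 1)!) := by ring
    _ ≤ 2 ^ k * (c + k)! * ((2 * c + k + 2) * (2 * c + k + 1)!) := by gcongr; omega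

lemma MedianAdmissible.mono {n j k : ℕ} (h : MedianAdmissible n k) (hjk : j ≤ k)
    (hk : k ≤ n - 2) : MedianAdmissible n j := by
  induction k, hjk using Nat.le_induction with
  | base => exact h
  | succ k _ ih => exact ih (h.of_succ hk) (by omega)

lemma le_median {n k : ℕ} (hk : k ≤ n - 2) (h : MedianAdmissible n k) : k ≤ median n :=
  le_csSup ⟨n - 2, fun _ hj => hj.1⟩ ⟨hk, h⟩

lemma median_le {n k : ℕ} (h : ¬MedianAdmissible n (k + 1)) : median n ≤ k :=
  csSup_le' fun j ⟨hj, hadm⟩ => by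
    by_contra! hkj
    exact h (MedianAdmissible.mono hadm hkj hj)

lemma medianAdmissible_iff (b d : ℕ) :
    MedianAdmissible (b + d + 3) (d + 1) ↔
      (2 * b + d + 2).ascFactorial d ≤ 2 ^ (d + 1) * (b + 1).ascFactorial d := by
  unfold MedianAdmissible
  rw [show 2 * (b + d + 3) - 5 = 2 * b + d + 1 + d by omega, show b + d + 3 - (d + 1) - 2 = b by omega,
    show b + d + 3 - 3 = b + d by omega, show 2 * (b + d + 3) - (d + 1) - 4 = 2 * b + d + 1 by omega,
    ← factorial_mul_ascFactorial (2 * b + d + 1), ← factorial_mul_ascFactorial b,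
    show (2 * b + d + 1)! * (2 * b + d + 1 + 1).ascFactorial d * b ! =
      (b ! * (2 * b + d + 1)!) * (2 * b + d + 2).ascFactorial d by ring,
    show 2 ^ (d + 1) * (b ! * (b + 1).ascFactorial d) * (2 * b + d + 1)! =
      (b ! * (2 * b + d + 1)!) * (2 ^ (d + 1) * (b + 1).ascFactorial d) by ring]
  exact Nat.mul_le_mul_left_iff (by positivity)

lemma natCast_ascFactorial (n d : ℕ) : (n.ascFactorial d : ℝ) = ∏ i ∈ range d, ((n : ℝ) + i) := by
  rw [ascFactorial_eq_prod_range]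
  push_cast
  rfl

lemma prod_range_two_mul (n d : ℕ) :
    ∏ i ∈ range d, 2 * ((n : ℝ) + i) = 2 ^ d * (n.ascFactorial d : ℝ) := by
  rw [prod_mul_distrib, prod_const, card_range, natCast_ascFactorial]

lemma natCast_sub_two_mul (b d i : ℕ) :
    ((2 * b + d + 2 : ℕ) : ℝ) + i - 2 * (((b + 1 : ℕ) : ℝ) + i) = d - i := by
  push_cast
  ring

lemma ascFactorial_le_of_le_log (b d : ℕ) (h : (d : ℝ) * (d + 1) ≤ 4 * Real.log 2 * (b + 1)) :
    (2 * b + d + 2).ascFactorial d ≤ 2 ^ (d + 1) * (b + 1).ascFactorial d := by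
  have hsum : ∑ i ∈ range d, ((d : ℝ) - i) / (2 * (((b + 1 : ℕ) : ℝ) + i)) ≤ Real.log 2 := calc
    _ ≤ ∑ i ∈ range d, ((d : ℝ) - i) / (2 * (b + 1)) := sum_le_sum fun i hi => by
          have : (i : ℝ) < d := by exact_mod_cast mem_range.1 hi
          push_cast
          gcongr ?_ / (2 * ?_)
          · linarith
          · linarith [(Nat.cast_nonneg i : (0 : ℝ) ≤ i)]
    _ = d * (d + 1) / (4 * (b + 1)) := by rw [← sum_div, sum_range_natCast_sub]; field_simp; ring
    _ ≤ Real.log 2 := by rw [div_le_iff₀ (by positivity)]; linarith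
  have key := prod_le_prod_mul_exp_sum (s := range d) (a := fun i => 2 * (((b + 1 : ℕ) : ℝ) + i))
    (c := fun i => ((2 * b + d + 2 : ℕ) : ℝ) + i) (fun _ _ => by positivity)
    (fun _ _ => by positivity)
  simp only [natCast_sub_two_mul] at key
  rw [← natCast_ascFactorial, prod_range_two_mul] at key
  have : (((2 * b + d + 2).ascFactorial d : ℕ) : ℝ) ≤ 2 ^ (d + 1) * ((b + 1).ascFactorial d : ℝ) :=
    calc _ ≤ _ := key
      _ ≤ 2 ^ d * ((b + 1).ascFactorial d : ℝ) * exp (Real.log 2) := by gcongr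
      _ = _ := by rw [exp_log two_pos]; ring
  exact_mod_cast this

lemma lt_ascFactorial_of_log_lt (b d : ℕ) (h : 4 * Real.log 2 * (b + d + 1) < (d : ℝ) * (d + 1)) :
    2 ^ (d + 1) * (b + 1).ascFactorial d < (2 * b + d + 2).ascFactorial d := by
  have hsum : Real.log 2 < ∑ i ∈ range d, ((d : ℝ) - i) / (((2 * b + d + 2 : ℕ) : ℝ) + i) := calc
    _ < (d : ℝ) * (d + 1) / (4 * (b + d + 1)) := by rw [lt_div_iff₀ (by positivity)]; linarith
    _ = ∑ i ∈ range d, ((d : ℝ) - i) / (2 * (b + d + 1)) := by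
          rw [← sum_div, sum_range_natCast_sub]; field_simp; ring
    _ ≤ _ := sum_le_sum fun i hi => by
          have : (i : ℝ) + 1 ≤ d := by exact_mod_cast mem_range.1 hi
          push_cast
          gcongr
          · linarith
          · linarith
  have key := prod_mul_exp_sum_le_prod (s := range d) (a := fun i => 2 * (((b + 1 : ℕ) : ℝ) + i))
    (c := fun i => ((2 * b + d + 2 : ℕ) : ℝ) + i) (fun _ _ => by positivity)
    (fun _ _ => by positivity)
  simp only [natCast_sub_two_mul] at key
  rw [← natCast_ascFactorial, prod_range_two_mul] at key
  have hpos : (0 : ℝ) < (b + 1).ascFactorial d := by exact_mod_cast ascFactorial_pos _ _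
  have : 2 ^ (d + 1) * ((b + 1).ascFactorial d : ℝ) < (((2 * b + d + 2).ascFactorial d : ℕ) : ℝ) :=
    calc _ = 2 ^ d * ((b + 1).ascFactorial d : ℝ) * exp (Real.log 2) := by
          rw [exp_log two_pos]; ring
      _ < _ := by gcongr
      _ ≤ _ := key
  exact_mod_cast this

lemma succ_le_median_of_le_log {n k : ℕ} (hkn : k + 3 ≤ n)
    (h : (k : ℝ) * (k + 1) ≤ 4 * Real.log 2 * ((n : ℝ) - k - 2)) : k + 1 ≤ median n := by
  obtain ⟨b, rfl⟩ : ∃ b, n = b + k + 3 := ⟨n - k - 3, by omega⟩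
  refine le_median (by omega) ((medianAdmissible_iff b k).2 (ascFactorial_le_of_le_log b k ?_))
  push_cast at h
  linarith

lemma median_le_of_log_lt {n k : ℕ} (hkn : k + 3 ≤ n)
    (h : 4 * Real.log 2 * ((n : ℝ) - 2) < k * (k + 1)) : median n ≤ k := by
  obtain ⟨b, rfl⟩ : ∃ b, n = b + k + 3 := ⟨n - k - 3, by omega⟩
  refine median_le fun hadm => ((medianAdmissible_iff b k).1 hadm).not_gt
    (lt_ascFactorial_of_log_lt b k ?_)
  push_cast at h
  linarith

theorem median_bounded_error :
    ∃ C : ℝ, 0 < C ∧ ∃ N : ℕ, ∀ n : ℕ, N ≤ n →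
      |(median n : ℝ) - Real.sqrt (4 * Real.log 2 * n)| ≤ C := by
  refine ⟨3, by norm_num, 10, fun n hn => ?_⟩
  have hL₁ := Real.log_two_gt_d9
  have hL₂ := Real.log_two_lt_d9
  have hn' : (10 : ℝ) ≤ n := by exact_mod_cast hn
  set m := √(4 * Real.log 2 * n)
  have hm0 : 0 ≤ m := sqrt_nonneg _
  have hm_sq : m ^ 2 = 4 * Real.log 2 * n := sq_sqrt (by positivity)
  set M := ⌊m⌋₊
  have hM_le : (M : ℝ) ≤ m := floor_le hm0
  have hM_gt : m < M + 1 := lt_floor_add_one m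
  have hM3 : 3 ≤ M := le_floor (by push_cast; nlinarith)
  have hMn : M + 4 ≤ n := by
    have : (M : ℝ) + 4 ≤ n := by nlinarith
    exact_mod_cast this
  have hM3' : (3 : ℝ) ≤ M := by exact_mod_cast hM3
  have hlow : M - 3 + 1 ≤ median n := succ_le_median_of_le_log (by omega) (by
    push_cast [Nat.cast_sub hM3]
    nlinarith [mul_self_le_mul_self (Nat.cast_nonneg M) hM_le])
  have hup : median n ≤ M + 1 := median_le_of_log_lt (by omega) (by
    push_cast
    nlinarith [mul_self_lt_mul_self hm0 hM_gt])
  have hlow' : (M : ℝ) ≤ median n + 2 := by exact_mod_cast (by omega : M ≤ median n + 2)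
  have hup' : (median n : ℝ) ≤ M + 1 := by exact_mod_cast hup
  rw [abs_le]
  constructor <;> linarith
end

section
/- For all real x with 0 ≤ x ≤ 1/(2j) and integer j ≥ 3, one has ln((2−(j+2)x)/(1−jx)) ≥ ln 2 + (1/2)(j−2)x, with equality iff x = 0. -/
open Real

theorem log_ratio_lower_bound (j : ℕ) (hj : 3 ≤ j) (x : ℝ) (hx0 : 0 ≤ x)
    (hx1 : x ≤ 1 / (2 * j)) :
    Real.log 2 + (1 / 2) * ((j : ℝ) - 2) * x ≤ Real.log ((2 - (j + 2) * x) / (1 - j * x)) ∧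
    (Real.log ((2 - (j + 2) * x) / (1 - j * x)) = Real.log 2 + (1 / 2) * ((j : ℝ) - 2) * x
      ↔ x = 0) := by
  have hj3 : (3:ℝ) ≤ (j:ℝ) := by exact_mod_cast hj
  have hjpos : (0:ℝ) < j := by linarith
  have hxj : (j:ℝ) * x ≤ 1/2 := by
    have := mul_le_mul_of_nonneg_left hx1 (le_of_lt hjpos)
    calc (j:ℝ)*x ≤ (j:ℝ) * (1/(2*(j:ℝ))) := this
      _ = 1/2 := by field_simp
  have hden : 0 < 1 - (j:ℝ)*x := by linarith
  have hnum : 0 < 2 - ((j:ℝ)+2)*x := by nlinarith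
  set s : ℝ := (1/2) * ((j:ℝ)-2) * x with hs
  have hs0 : 0 ≤ s := by
    apply mul_nonneg _ hx0
    nlinarith
  have hs1 : s < 1 := by nlinarith
  have hexp : (1 - s) * Real.exp s ≤ 1 := by
    have h := Real.add_one_le_exp (-s)
    calc (1-s)*Real.exp s ≤ Real.exp (-s) * Real.exp s := by
          apply mul_le_mul_of_nonneg_right _ (Real.exp_nonneg s); linarith
      _ = 1 := by rw [← Real.exp_add]; simp
  have hA : 2*(1-(j:ℝ)*x) ≤ (2 - ((j:ℝ)+2)*x)*(1-s) := by nlinarith [sq_nonneg x]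
  have hR : 2 * Real.exp s ≤ (2 - ((j:ℝ)+2)*x)/(1 - (j:ℝ)*x) := by
    rw [le_div_iff₀ hden]
    nlinarith [Real.exp_pos s, hexp, hA]
  have hRpos : 0 < 2 * Real.exp s := by positivity
  have hlog2 : Real.log (2 * Real.exp s) = Real.log 2 + s := by
    rw [Real.log_mul two_ne_zero (Real.exp_ne_zero s), Real.log_exp]
  have hmain : Real.log 2 + s ≤ Real.log ((2 - ((j:ℝ)+2)*x)/(1 - (j:ℝ)*x)) := by
    rw [← hlog2]
    exact Real.log_le_log hRpos hR
  have hstrict : x ≠ 0 → Real.log 2 + s < Real.log ((2 - ((j:ℝ)+2)*x)/(1 - (j:ℝ)*x)) := by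
    intro hxne
    have hxpos : 0 < x := lt_of_le_of_ne hx0 (Ne.symm hxne)
    have hA' : 2*(1-(j:ℝ)*x) < (2 - ((j:ℝ)+2)*x)*(1-s) := by nlinarith [sq_nonneg x]
    have hR' : 2 * Real.exp s < (2 - ((j:ℝ)+2)*x)/(1 - (j:ℝ)*x) := by
      rw [lt_div_iff₀ hden]
      nlinarith [Real.exp_pos s, hexp, hA']
    rw [← hlog2]
    exact Real.log_lt_log hRpos hR'
  refine ⟨hmain, ?_, ?_⟩
  · intro heq
    by_contra hxne
    exact absurd heq.symm (ne_of_lt (hstrict hxne))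
  · intro hx
    subst hx
    simp [hs]
end
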